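/- arXiv:2209.04202 — 4 statements merged into one kernel-verified Lean document; each statement's English description precedes it below -/
import Mathlib

section
/- For the cubic AGM iteration with a_0 ≥ b_0 > 0, the sequences (a_n) and (b_n) converge to a common limit. -/
open Filter Topology

private lemma cube_root_pow (y : ℝ) (hy : 0 ≤ y) : (y ^ 3) ^ ((1 : ℝ) / 3) = y := by
  rw [← Real.rpow_natCast y 3, ← Real.rpow_mul hy]
  norm_num

theorem cubic_agm_converges (a b : ℕ → ℝ)
    (hb0 : 0 < b 0) (hab : b 0 ≤ a 0)
    (ha : ∀ n, a (n + 1) = (a n + 2 * b n) / 3)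
    (hb : ∀ n, b (n + 1) = (b n * (a n ^ 2 + a n * b n + b n ^ 2) / 3) ^ ((1 : ℝ) / 3)) :
    ∃ L : ℝ, Tendsto a atTop (𝓝 L) ∧ Tendsto b atTop (𝓝 L) := by
  have key : ∀ n, 0 < b n ∧ b n ≤ a n := by
    intro n
    induction n with
    | zero => exact ⟨hb0, hab⟩
    | succ n ih =>
      obtain ⟨hbpos, hble⟩ := ih
      have hapos : 0 < a n := lt_of_lt_of_le hbpos hble
      have hxpos : 0 < b n * (a n ^ 2 + a n * b n + b n ^ 2) / 3 := by positivity
      have ha1pos : 0 < (a n + 2 * b n) / 3 := by linarith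
      refine ⟨by rw [hb n]; exact Real.rpow_pos_of_pos hxpos _, ?_⟩
      have hcube : b n * (a n ^ 2 + a n * b n + b n ^ 2) / 3 ≤ ((a n + 2 * b n) / 3) ^ 3 := by
        have h3 : 0 ≤ (a n - b n) * (a n - b n) * (a n - b n) := by
          have := sub_nonneg.2 hble
          positivity
        nlinarith [h3]
      rw [hb n, ha n]
      calc (b n * (a n ^ 2 + a n * b n + b n ^ 2) / 3) ^ ((1 : ℝ) / 3)
          ≤ (((a n + 2 * b n) / 3) ^ 3) ^ ((1 : ℝ) / 3) :=
            Real.rpow_le_rpow hxpos.le hcube (by norm_num)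
        _ = (a n + 2 * b n) / 3 := cube_root_pow _ ha1pos.le
  have haanti : Antitone a := by
    apply antitone_nat_of_succ_le
    intro n
    obtain ⟨hbpos, hble⟩ := key n
    rw [ha n]; linarith
  have hbmono : Monotone b := by
    apply monotone_nat_of_le_succ
    intro n
    obtain ⟨hbpos, hble⟩ := key n
    have hcube : b n ^ 3 ≤ b n * (a n ^ 2 + a n * b n + b n ^ 2) / 3 := by
      nlinarith [sq_nonneg (a n - b n), sq_nonneg (a n + b n), hbpos.le]
    rw [hb n]
    calc b n = (b n ^ 3) ^ ((1 : ℝ) / 3) := (cube_root_pow _ hbpos.le).symm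
      _ ≤ (b n * (a n ^ 2 + a n * b n + b n ^ 2) / 3) ^ ((1 : ℝ) / 3) :=
          Real.rpow_le_rpow (by positivity) hcube (by norm_num)
  have hLbdd : BddBelow (Set.range a) := by
    refine ⟨b 0, ?_⟩
    rintro x ⟨n, rfl⟩
    exact (hbmono (Nat.zero_le n)).trans (key n).2
  have hMbdd : BddAbove (Set.range b) := by
    refine ⟨a 0, ?_⟩
    rintro x ⟨n, rfl⟩
    exact (key n).2.trans (haanti (Nat.zero_le n))
  have hL : Tendsto a atTop (𝓝 (⨅ n, a n)) := tendsto_atTop_ciInf haanti hLbdd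
  have hM : Tendsto b atTop (𝓝 (⨆ n, b n)) := tendsto_atTop_ciSup hbmono hMbdd
  set L := ⨅ n, a n
  set M := ⨆ n, b n
  have h1 : Tendsto (fun n => a (n + 1)) atTop (𝓝 L) := hL.comp (tendsto_add_atTop_nat 1)
  have h2 : Tendsto (fun n => (a n + 2 * b n) / 3) atTop (𝓝 ((L + 2 * M) / 3)) :=
    (hL.add (hM.const_mul 2)).div_const 3
  have heq : L = (L + 2 * M) / 3 := by
    refine tendsto_nhds_unique ?_ h2
    simpa only [ha] using h1
  have hLM : M = L := by linarith
  exact ⟨L, hL, hLM ▸ hM⟩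
end

section
/- Jacobi's identity for theta constants: for 0 < q < 1, θ₃(q)⁴ = θ₂(q)⁴ + θ₄(q)⁴. -/
open Function

section Aux

variable {q : ℝ}

private lemma geo_int (hq0 : 0 < q) (hq1 : q < 1) :
    Summable (fun k : ℤ => q ^ k.natAbs) := by
  apply Summable.of_nat_of_neg <;>
    simpa using summable_geometric_of_lt_one hq0.le hq1

private lemma summable_theta_aux (hq0 : 0 < q) (hq1 : q < 1) {c : ℝ} (hc0 : 0 ≤ c)
    (hc1 : c ≤ 1 / 2) :
    Summable (fun k : ℤ => q ^ (((k : ℝ) + c) ^ 2)) := by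
  refine Summable.of_nonneg_of_le (fun k => (Real.rpow_pos_of_pos hq0 _).le)
    (fun k => ?_) (((geo_int hq0 hq1).mul_left q⁻¹))
  have h1 : (k.natAbs : ℝ) - 1 ≤ ((k : ℝ) + c) ^ 2 := by
    have hcast : (k.natAbs : ℝ) = |(k : ℝ)| := by
      push_cast [Nat.cast_natAbs]
      ring
    rcases le_or_gt 0 (k : ℝ) with hk | hk
    · rw [hcast, abs_of_nonneg hk]; nlinarith
    · have hk' : k < 0 := by exact_mod_cast hk
      have hk1 : (k : ℝ) ≤ -1 := by
        have h' : k ≤ -1 := by omega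
        exact_mod_cast h'
      rw [hcast, abs_of_nonpos hk.le]; nlinarith
  calc q ^ (((k : ℝ) + c) ^ 2) ≤ q ^ ((k.natAbs : ℝ) - 1) :=
        Real.rpow_le_rpow_of_exponent_ge hq0 hq1.le h1
    _ = q⁻¹ * q ^ k.natAbs := by
        rw [Real.rpow_sub hq0, Real.rpow_natCast, Real.rpow_one]; ring

private lemma S3 (hq0 : 0 < q) (hq1 : q < 1) :
    Summable (fun k : ℤ => q ^ ((k : ℝ) ^ 2)) := by
  simpa using summable_theta_aux hq0 hq1 (le_refl (0:ℝ)) (by norm_num)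

private lemma S2 (hq0 : 0 < q) (hq1 : q < 1) :
    Summable (fun k : ℤ => q ^ (((k : ℝ) + 1 / 2) ^ 2)) :=
  summable_theta_aux hq0 hq1 (by norm_num) (le_refl _)

private lemma abs4 (hq0 : 0 < q) (k : ℤ) :
    |(-1 : ℝ) ^ k * q ^ ((k : ℝ) ^ 2)| = q ^ ((k : ℝ) ^ 2) := by
  rw [abs_mul, abs_of_pos (Real.rpow_pos_of_pos hq0 _)]
  have : |(-1 : ℝ) ^ k| = 1 := by
    rcases Int.even_or_odd k with h | h
    · rw [h.neg_one_zpow]; norm_num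
    · rw [h.neg_one_zpow]; norm_num
  rw [this, one_mul]

private lemma S4 (hq0 : 0 < q) (hq1 : q < 1) :
    Summable (fun k : ℤ => (-1 : ℝ) ^ k * q ^ ((k : ℝ) ^ 2)) := by
  refine Summable.of_abs ?_
  simp only [abs4 hq0]
  exact S3 hq0 hq1

end Aux

private lemma tsum_mul_tsum_int (f g : ℤ → ℝ)
    (h : Summable (fun p : ℤ × ℤ => f p.1 * g p.2)) :
    (∑' k, f k) * (∑' k, g k) = ∑' p : ℤ × ℤ, f p.1 * g p.2 := by
  rw [Summable.tsum_prod h]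
  simp_rw [tsum_mul_left]
  rw [tsum_mul_right]

private lemma tsum_split {f : ℤ × ℤ → ℝ} (hf : Summable f) (g₁ g₂ : (ℤ × ℤ) → ℤ × ℤ)
    (h₁ : Injective g₁) (h₂ : Injective g₂)
    (hdis : ∀ p r, g₁ p ≠ g₂ r)
    (hcov : ∀ x, (∃ p, g₁ p = x) ∨ (∃ p, g₂ p = x)) :
    ∑' x, f x = (∑' p, f (g₁ p)) + (∑' p, f (g₂ p)) := by
  have hs1 : Summable (f ∘ g₁) := hf.comp_injective h₁
  have hs2 : Summable (f ∘ g₂) := hf.comp_injective h₂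
  have hr1 : HasSum (f ∘ ((↑) : Set.range g₁ → ℤ × ℤ)) (∑' p, f (g₁ p)) :=
    (h₁.hasSum_range_iff).mpr hs1.hasSum
  have hr2 : HasSum (f ∘ ((↑) : Set.range g₂ → ℤ × ℤ)) (∑' p, f (g₂ p)) :=
    (h₂.hasSum_range_iff).mpr hs2.hasSum
  have hcompl : IsCompl (Set.range g₁) (Set.range g₂) := by
    constructor
    · rw [Set.disjoint_left]
      rintro x ⟨p, rfl⟩ hx
      obtain ⟨r, hr⟩ := hx
      exact hdis p r hr.symm
    · rw [codisjoint_iff_le_sup]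
      intro x _
      rcases hcov x with ⟨p, hp⟩ | ⟨p, hp⟩
      · exact Or.inl ⟨p, hp⟩
      · exact Or.inr ⟨p, hp⟩
  exact (hr1.add_isCompl hcompl hr2).tsum_eq

/-- Jacobi theta constant `θ₂(q) = ∑_{k ∈ ℤ} q^((k+1/2)²)`. -/
noncomputable def jacobiTheta2 (q : ℝ) : ℝ := ∑' k : ℤ, q ^ (((k : ℝ) + 1 / 2) ^ 2)

/-- Jacobi theta constant `θ₃(q) = ∑_{k ∈ ℤ} q^(k²)`. -/
noncomputable def jacobiTheta3 (q : ℝ) : ℝ := ∑' k : ℤ, q ^ (((k : ℝ)) ^ 2)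

/-- Jacobi theta constant `θ₄(q) = ∑_{k ∈ ℤ} (-1)^k q^(k²)`. -/
noncomputable def jacobiTheta4 (q : ℝ) : ℝ := ∑' k : ℤ, (-1 : ℝ) ^ k * q ^ (((k : ℝ)) ^ 2)

section Main

variable {q : ℝ}

private lemma hsq (hq0 : 0 < q) (x : ℝ) : (q ^ 2 : ℝ) ^ x = q ^ (2 * x) := by
  rw [← Real.rpow_natCast q 2, ← Real.rpow_mul hq0.le]
  norm_num

set_option maxHeartbeats 1000000 in
private lemma L1 (hq0 : 0 < q) (hq1 : q < 1) :
    jacobiTheta3 q ^ 2 = jacobiTheta3 (q ^ 2) ^ 2 + jacobiTheta2 (q ^ 2) ^ 2 := by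
  have hQ0 : (0:ℝ) < q ^ 2 := by positivity
  have hQ1 : q ^ 2 < 1 := by nlinarith
  have hprod : Summable (fun p : ℤ × ℤ => q ^ ((p.1 : ℝ) ^ 2) * q ^ ((p.2 : ℝ) ^ 2)) :=
    (S3 hq0 hq1).mul_of_nonneg (S3 hq0 hq1)
      (fun k => (Real.rpow_pos_of_pos hq0 _).le) (fun k => (Real.rpow_pos_of_pos hq0 _).le)
  have hprod3' : Summable (fun p : ℤ × ℤ =>
      (q ^ 2) ^ ((p.1 : ℝ) ^ 2) * (q ^ 2) ^ ((p.2 : ℝ) ^ 2)) :=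
    (S3 hQ0 hQ1).mul_of_nonneg (S3 hQ0 hQ1)
      (fun k => (Real.rpow_pos_of_pos hQ0 _).le) (fun k => (Real.rpow_pos_of_pos hQ0 _).le)
  have hprod2' : Summable (fun p : ℤ × ℤ =>
      (q ^ 2) ^ (((p.1 : ℝ) + 1 / 2) ^ 2) * (q ^ 2) ^ (((p.2 : ℝ) + 1 / 2) ^ 2)) :=
    (S2 hQ0 hQ1).mul_of_nonneg (S2 hQ0 hQ1)
      (fun k => (Real.rpow_pos_of_pos hQ0 _).le) (fun k => (Real.rpow_pos_of_pos hQ0 _).le)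
  have e0 : jacobiTheta3 q ^ 2 = ∑' p : ℤ × ℤ, q ^ ((p.1 : ℝ) ^ 2) * q ^ ((p.2 : ℝ) ^ 2) := by
    rw [pow_two (jacobiTheta3 q), jacobiTheta3]
    exact tsum_mul_tsum_int (fun k : ℤ => q ^ ((k : ℝ) ^ 2)) (fun k : ℤ => q ^ ((k : ℝ) ^ 2)) hprod
  rw [e0, tsum_split hprod (fun p => (p.1 + p.2, p.1 - p.2)) (fun p => (p.1 + p.2 + 1, p.1 - p.2))
    (by rintro ⟨a, b⟩ ⟨c, d⟩ h; simp only [Prod.mk.injEq] at h ⊢; omega)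
    (by rintro ⟨a, b⟩ ⟨c, d⟩ h; simp only [Prod.mk.injEq] at h ⊢; omega)
    (by rintro ⟨a, b⟩ ⟨c, d⟩ h; simp only [Prod.mk.injEq] at h; omega)
    (by
      rintro ⟨x, y⟩
      rcases Int.even_or_odd (x + y) with ⟨t, ht⟩ | ⟨t, ht⟩
      · exact Or.inl ⟨⟨t, x - t⟩, by simp only [Prod.mk.injEq]; omega⟩
      · exact Or.inr ⟨⟨t, x - 1 - t⟩, by simp only [Prod.mk.injEq]; omega⟩)]
  congr 1
  · rw [pow_two (jacobiTheta3 (q ^ 2)), jacobiTheta3, tsum_mul_tsum_int (fun k : ℤ => (q ^ 2) ^ ((k : ℝ) ^ 2)) (fun k : ℤ => (q ^ 2) ^ ((k : ℝ) ^ 2)) hprod3']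
    apply tsum_congr
    rintro ⟨a, b⟩
    simp only
    push_cast
    rw [hsq hq0, hsq hq0, ← Real.rpow_add hq0, ← Real.rpow_add hq0]
    congr 1
    ring
  · rw [pow_two (jacobiTheta2 (q ^ 2)), jacobiTheta2, tsum_mul_tsum_int (fun k : ℤ => (q ^ 2) ^ (((k : ℝ) + 1 / 2) ^ 2)) (fun k : ℤ => (q ^ 2) ^ (((k : ℝ) + 1 / 2) ^ 2)) hprod2']
    apply tsum_congr
    rintro ⟨a, b⟩
    simp only
    push_cast
    rw [hsq hq0, hsq hq0, ← Real.rpow_add hq0, ← Real.rpow_add hq0]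
    congr 1
    ring

set_option maxHeartbeats 1000000 in
private lemma L2 (hq0 : 0 < q) (hq1 : q < 1) :
    jacobiTheta4 q ^ 2 = jacobiTheta3 (q ^ 2) ^ 2 - jacobiTheta2 (q ^ 2) ^ 2 := by
  have hQ0 : (0:ℝ) < q ^ 2 := by positivity
  have hQ1 : q ^ 2 < 1 := by nlinarith
  have hprod : Summable (fun p : ℤ × ℤ => q ^ ((p.1 : ℝ) ^ 2) * q ^ ((p.2 : ℝ) ^ 2)) :=
    (S3 hq0 hq1).mul_of_nonneg (S3 hq0 hq1)
      (fun k => (Real.rpow_pos_of_pos hq0 _).le) (fun k => (Real.rpow_pos_of_pos hq0 _).le)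
  have hprod4 : Summable (fun p : ℤ × ℤ =>
      ((-1 : ℝ) ^ p.1 * q ^ ((p.1 : ℝ) ^ 2)) * ((-1 : ℝ) ^ p.2 * q ^ ((p.2 : ℝ) ^ 2))) := by
    refine Summable.of_abs ?_
    have habs : ∀ p : ℤ × ℤ,
        |((-1 : ℝ) ^ p.1 * q ^ ((p.1 : ℝ) ^ 2)) * ((-1 : ℝ) ^ p.2 * q ^ ((p.2 : ℝ) ^ 2))|
          = q ^ ((p.1 : ℝ) ^ 2) * q ^ ((p.2 : ℝ) ^ 2) := fun p => by
      rw [abs_mul, abs4 hq0, abs4 hq0]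
    simp only [habs]
    exact hprod
  have hprod3' : Summable (fun p : ℤ × ℤ =>
      (q ^ 2) ^ ((p.1 : ℝ) ^ 2) * (q ^ 2) ^ ((p.2 : ℝ) ^ 2)) :=
    (S3 hQ0 hQ1).mul_of_nonneg (S3 hQ0 hQ1)
      (fun k => (Real.rpow_pos_of_pos hQ0 _).le) (fun k => (Real.rpow_pos_of_pos hQ0 _).le)
  have hprod2' : Summable (fun p : ℤ × ℤ =>
      (q ^ 2) ^ (((p.1 : ℝ) + 1 / 2) ^ 2) * (q ^ 2) ^ (((p.2 : ℝ) + 1 / 2) ^ 2)) :=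
    (S2 hQ0 hQ1).mul_of_nonneg (S2 hQ0 hQ1)
      (fun k => (Real.rpow_pos_of_pos hQ0 _).le) (fun k => (Real.rpow_pos_of_pos hQ0 _).le)
  have e0 : jacobiTheta4 q ^ 2 = ∑' p : ℤ × ℤ,
      ((-1 : ℝ) ^ p.1 * q ^ ((p.1 : ℝ) ^ 2)) * ((-1 : ℝ) ^ p.2 * q ^ ((p.2 : ℝ) ^ 2)) := by
    rw [pow_two (jacobiTheta4 q), jacobiTheta4]
    exact tsum_mul_tsum_int (fun k : ℤ => (-1 : ℝ) ^ k * q ^ ((k : ℝ) ^ 2))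
      (fun k : ℤ => (-1 : ℝ) ^ k * q ^ ((k : ℝ) ^ 2)) hprod4
  rw [e0, tsum_split hprod4 (fun p => (p.1 + p.2, p.1 - p.2)) (fun p => (p.1 + p.2 + 1, p.1 - p.2))
    (by rintro ⟨a, b⟩ ⟨c, d⟩ h; simp only [Prod.mk.injEq] at h ⊢; omega)
    (by rintro ⟨a, b⟩ ⟨c, d⟩ h; simp only [Prod.mk.injEq] at h ⊢; omega)
    (by rintro ⟨a, b⟩ ⟨c, d⟩ h; simp only [Prod.mk.injEq] at h; omega)
    (by
      rintro ⟨x, y⟩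
      rcases Int.even_or_odd (x + y) with ⟨t, ht⟩ | ⟨t, ht⟩
      · exact Or.inl ⟨⟨t, x - t⟩, by simp only [Prod.mk.injEq]; omega⟩
      · exact Or.inr ⟨⟨t, x - 1 - t⟩, by simp only [Prod.mk.injEq]; omega⟩), sub_eq_add_neg]
  congr 1
  · rw [pow_two (jacobiTheta3 (q ^ 2)), jacobiTheta3,
      tsum_mul_tsum_int (fun k : ℤ => (q ^ 2) ^ ((k : ℝ) ^ 2))
        (fun k : ℤ => (q ^ 2) ^ ((k : ℝ) ^ 2)) hprod3']
    apply tsum_congr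
    rintro ⟨a, b⟩
    simp only
    have hs : (-1 : ℝ) ^ (a + b) * (-1 : ℝ) ^ (a - b) = 1 := by
      rw [← zpow_add₀ (by norm_num : (-1 : ℝ) ≠ 0)]
      have h2 : a + b + (a - b) = 2 * a := by ring
      rw [h2, zpow_mul]
      norm_num
    rw [mul_mul_mul_comm, hs, one_mul]
    push_cast
    rw [hsq hq0, hsq hq0, ← Real.rpow_add hq0, ← Real.rpow_add hq0]
    congr 1
    ring
  · rw [pow_two (jacobiTheta2 (q ^ 2)), jacobiTheta2,
      tsum_mul_tsum_int (fun k : ℤ => (q ^ 2) ^ (((k : ℝ) + 1 / 2) ^ 2))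
        (fun k : ℤ => (q ^ 2) ^ (((k : ℝ) + 1 / 2) ^ 2)) hprod2', ← tsum_neg]
    apply tsum_congr
    rintro ⟨a, b⟩
    simp only
    have hs : (-1 : ℝ) ^ (a + b + 1) * (-1 : ℝ) ^ (a - b) = -1 := by
      rw [← zpow_add₀ (by norm_num : (-1 : ℝ) ≠ 0)]
      have h2 : a + b + 1 + (a - b) = 2 * a + 1 := by ring
      rw [h2, zpow_add₀ (by norm_num : (-1 : ℝ) ≠ 0), zpow_mul]
      norm_num
    rw [mul_mul_mul_comm, hs, neg_one_mul, neg_inj]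
    push_cast
    rw [hsq hq0, hsq hq0, ← Real.rpow_add hq0, ← Real.rpow_add hq0]
    congr 1
    ring

set_option maxHeartbeats 1000000 in
private lemma L3 (hq0 : 0 < q) (hq1 : q < 1) :
    jacobiTheta2 q ^ 2 = 2 * (jacobiTheta2 (q ^ 2) * jacobiTheta3 (q ^ 2)) := by
  have hQ0 : (0:ℝ) < q ^ 2 := by positivity
  have hQ1 : q ^ 2 < 1 := by nlinarith
  have hprod : Summable (fun p : ℤ × ℤ =>
      q ^ (((p.1 : ℝ) + 1 / 2) ^ 2) * q ^ (((p.2 : ℝ) + 1 / 2) ^ 2)) :=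
    (S2 hq0 hq1).mul_of_nonneg (S2 hq0 hq1)
      (fun k => (Real.rpow_pos_of_pos hq0 _).le) (fun k => (Real.rpow_pos_of_pos hq0 _).le)
  have hprod23' : Summable (fun p : ℤ × ℤ =>
      (q ^ 2) ^ (((p.1 : ℝ) + 1 / 2) ^ 2) * (q ^ 2) ^ ((p.2 : ℝ) ^ 2)) :=
    (S2 hQ0 hQ1).mul_of_nonneg (S3 hQ0 hQ1)
      (fun k => (Real.rpow_pos_of_pos hQ0 _).le) (fun k => (Real.rpow_pos_of_pos hQ0 _).le)
  have e0 : jacobiTheta2 q ^ 2 = ∑' p : ℤ × ℤ,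
      q ^ (((p.1 : ℝ) + 1 / 2) ^ 2) * q ^ (((p.2 : ℝ) + 1 / 2) ^ 2) := by
    rw [pow_two (jacobiTheta2 q), jacobiTheta2]
    exact tsum_mul_tsum_int (fun k : ℤ => q ^ (((k : ℝ) + 1 / 2) ^ 2))
      (fun k : ℤ => q ^ (((k : ℝ) + 1 / 2) ^ 2)) hprod
  rw [e0, tsum_split hprod (fun p => (p.1 + p.2, p.1 - p.2)) (fun p => (p.1 + p.2, p.2 - p.1 - 1))
    (by rintro ⟨a, b⟩ ⟨c, d⟩ h; simp only [Prod.mk.injEq] at h ⊢; omega)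
    (by rintro ⟨a, b⟩ ⟨c, d⟩ h; simp only [Prod.mk.injEq] at h ⊢; omega)
    (by rintro ⟨a, b⟩ ⟨c, d⟩ h; simp only [Prod.mk.injEq] at h; omega)
    (by
      rintro ⟨x, y⟩
      rcases Int.even_or_odd (x + y) with ⟨t, ht⟩ | ⟨t, ht⟩
      · exact Or.inl ⟨⟨t, x - t⟩, by simp only [Prod.mk.injEq]; omega⟩
      · exact Or.inr ⟨⟨x - t - 1, t + 1⟩, by simp only [Prod.mk.injEq]; omega⟩), two_mul]
  congr 1
  · rw [jacobiTheta2, jacobiTheta3,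
      tsum_mul_tsum_int (fun k : ℤ => (q ^ 2) ^ (((k : ℝ) + 1 / 2) ^ 2))
        (fun k : ℤ => (q ^ 2) ^ ((k : ℝ) ^ 2)) hprod23']
    apply tsum_congr
    rintro ⟨a, b⟩
    simp only
    push_cast
    rw [hsq hq0, hsq hq0, ← Real.rpow_add hq0, ← Real.rpow_add hq0]
    congr 1
    ring
  · rw [jacobiTheta2, jacobiTheta3,
      tsum_mul_tsum_int (fun k : ℤ => (q ^ 2) ^ (((k : ℝ) + 1 / 2) ^ 2))
        (fun k : ℤ => (q ^ 2) ^ ((k : ℝ) ^ 2)) hprod23']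
    apply tsum_congr
    rintro ⟨a, b⟩
    simp only
    push_cast
    rw [hsq hq0, hsq hq0, ← Real.rpow_add hq0, ← Real.rpow_add hq0]
    congr 1
    ring

end Main

theorem jacobi_identity (q : ℝ) (hq0 : 0 < q) (hq1 : q < 1) :
    jacobiTheta3 q ^ 4 = jacobiTheta2 q ^ 4 + jacobiTheta4 q ^ 4 := by
  have h1 := L1 hq0 hq1
  have h2 := L2 hq0 hq1
  have h3 := L3 hq0 hq1
  calc jacobiTheta3 q ^ 4 = (jacobiTheta3 q ^ 2) ^ 2 := by ring
    _ = (jacobiTheta3 (q ^ 2) ^ 2 + jacobiTheta2 (q ^ 2) ^ 2) ^ 2 := by rw [h1]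
    _ = (2 * (jacobiTheta2 (q ^ 2) * jacobiTheta3 (q ^ 2))) ^ 2
        + (jacobiTheta3 (q ^ 2) ^ 2 - jacobiTheta2 (q ^ 2) ^ 2) ^ 2 := by ring
    _ = jacobiTheta2 q ^ 4 + jacobiTheta4 q ^ 4 := by rw [← h3, ← h2]; ring
end

section
/- Gauss's evaluation: ₂F₁(1/3, 2/3; 1; 1/2) = Γ(1/2) / (Γ(2/3) Γ(5/6)). -/
/-- The Gauss hypergeometric series `₂F₁(a, b; c; x)` for real parameters. -/
noncomputable def hyper2F1 (a b c x : ℝ) : ℝ :=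
  ∑' n : ℕ, (ascPochhammer ℝ n).eval a * (ascPochhammer ℝ n).eval b /
    ((ascPochhammer ℝ n).eval c * n.factorial) * x ^ n

open Real MeasureTheory Set intervalIntegral

noncomputable def P (a : ℝ) (n : ℕ) : ℝ := (ascPochhammer ℝ n).eval a
lemma P_zero (a : ℝ) : P a 0 = 1 := by simp [P]
lemma P_succ (a : ℝ) (n : ℕ) : P a (n+1) = P a n * (a + n) := by
  simp [P, ascPochhammer_succ_right, Polynomial.eval_mul]
lemma P_pos {a : ℝ} (ha : 0 < a) (n : ℕ) : 0 < P a n := by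
  induction n with
  | zero => simp [P_zero]
  | succ n ih => rw [P_succ]; positivity
lemma P_le_factorial {a : ℝ} (ha : a ≤ 1) (ha0 : 0 < a) (n : ℕ) : P a n ≤ n.factorial := by
  induction n with
  | zero => simp [P_zero]
  | succ n ih =>
      rw [P_succ, Nat.factorial_succ]
      push_cast
      have h1 : a + n ≤ n + 1 := by linarith
      have := P_pos ha0 n
      have hf : (0:ℝ) < n.factorial := by positivity
      nlinarith

section Binomial
variable {a : ℝ} (ha0 : 0 < a) (ha : a ≤ 1)
include ha0 ha

lemma coef_le_one (n : ℕ) : |P a n / n.factorial| ≤ 1 := by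
  rw [abs_div, abs_of_pos (P_pos ha0 n), abs_of_pos (show (0:ℝ) < n.factorial by positivity)]
  rw [div_le_one (by positivity)]
  exact P_le_factorial ha ha0 n

lemma summable_bin {x : ℝ} (hx : |x| < 1) :
    Summable (fun n => P a n / n.factorial * x ^ n) := by
  apply Summable.of_norm
  apply Summable.of_nonneg_of_le (fun n => norm_nonneg _) (fun n => ?_)
    (summable_geometric_of_lt_one (abs_nonneg x) hx)
  rw [norm_mul, norm_pow, Real.norm_eq_abs, Real.norm_eq_abs]
  calc |P a n / n.factorial| * |x| ^ n ≤ 1 * |x| ^ n := by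
        apply mul_le_mul_of_nonneg_right (coef_le_one ha0 ha n) (by positivity)
    _ = |x| ^ n := one_mul _

lemma summable_bin_deriv {x : ℝ} (hx : |x| < 1) :
    Summable (fun n : ℕ => P a n / n.factorial * ((n:ℝ) * x ^ (n-1))) := by
  apply Summable.of_norm
  have hs : Summable (fun n : ℕ => (n:ℝ) * |x| ^ (n-1)) := by
    rw [← summable_nat_add_iff 1]
    have h1 : Summable (fun n : ℕ => ((n:ℝ)^1) * |x| ^ n) :=
      summable_pow_mul_geometric_of_norm_lt_one 1 (by simpa using hx)
    have h2 : Summable (fun n : ℕ => |x| ^ n) := summable_geometric_of_lt_one (abs_nonneg x) hx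
    apply ((h1.add h2)).congr
    intro n
    push_cast
    ring
  apply Summable.of_nonneg_of_le (fun n => norm_nonneg _) (fun n => ?_) hs
  rw [norm_mul, norm_mul, Real.norm_eq_abs, Real.norm_eq_abs, Real.norm_eq_abs, abs_pow,
    Nat.abs_cast]
  calc |P a n / n.factorial| * ((n:ℝ) * |x| ^ (n-1)) ≤ 1 * ((n:ℝ) * |x| ^ (n-1)) := by
        apply mul_le_mul_of_nonneg_right (coef_le_one ha0 ha n) (by positivity)
    _ = _ := one_mul _
end Binomial

lemma summable_n_geom {r : ℝ} (h0 : 0 ≤ r) (h1 : r < 1) :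
    Summable (fun n : ℕ => (n:ℝ) * r ^ (n-1)) := by
  rw [← summable_nat_add_iff 1]
  have h1' : Summable (fun n : ℕ => ((n:ℝ)^1) * r ^ n) :=
    summable_pow_mul_geometric_of_norm_lt_one 1 (by simpa [abs_of_nonneg h0] using h1)
  have h2 : Summable (fun n : ℕ => r ^ n) := summable_geometric_of_lt_one h0 h1
  apply ((h1'.add h2)).congr
  intro n
  push_cast
  ring

section Binomial2
variable {a : ℝ} (ha0 : 0 < a) (ha : a ≤ 1)
include ha0 ha

lemma bin_hasDerivAt {y : ℝ} (hy : y ∈ Ioo (-(3/4):ℝ) (3/4)) :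
    HasDerivAt (fun z => ∑' n, P a n / n.factorial * z ^ n)
      (∑' n : ℕ, P a n / n.factorial * ((n:ℝ) * y ^ (n-1))) y := by
  apply hasDerivAt_tsum_of_isPreconnected
    (u := fun n : ℕ => (n:ℝ) * (3/4) ^ (n-1))
    (summable_n_geom (by norm_num) (by norm_num)) isOpen_Ioo
    (convex_Ioo _ _).isPreconnected
    (fun n z _ => (hasDerivAt_pow n z).const_mul (P a n / n.factorial))
    (fun n z hz => ?_) (y₀ := 0) (by constructor <;> norm_num)
    (summable_bin ha0 ha (x := 0) (by norm_num)) hy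
  rw [Real.norm_eq_abs, abs_mul, abs_mul, Nat.abs_cast, abs_pow]
  have hz34 : |z| ≤ 3/4 := by
    rw [abs_le]; exact ⟨hz.1.le, hz.2.le⟩
  calc |P a n / n.factorial| * ((n:ℝ) * |z| ^ (n-1))
      ≤ 1 * ((n:ℝ) * (3/4) ^ (n-1)) := by
        apply mul_le_mul (coef_le_one ha0 ha n) ?_ (by positivity) zero_le_one
        exact mul_le_mul_of_nonneg_left (pow_le_pow_left₀ (abs_nonneg z) hz34 _) (Nat.cast_nonneg n)
    _ = (fun n : ℕ => (n:ℝ) * (3/4) ^ (n-1)) n := one_mul _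

lemma bin_deriv_eq {y : ℝ} (hy : |y| < 1) :
    (1 - y) * (∑' n : ℕ, P a n / n.factorial * ((n:ℝ) * y ^ (n-1)))
      = a * ∑' n, P a n / n.factorial * y ^ n := by
  have hD := summable_bin_deriv ha0 ha hy
  have hf := summable_bin ha0 ha hy
  have key : (∑' n : ℕ, P a n / n.factorial * ((n:ℝ) * y ^ (n-1)))
      = a * (∑' n, P a n / n.factorial * y ^ n)
        + y * (∑' n : ℕ, P a n / n.factorial * ((n:ℝ) * y ^ (n-1))) := by
    conv_lhs => rw [hD.tsum_eq_zero_add]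
    simp only [Nat.cast_zero, zero_mul, mul_zero, zero_add]
    have congr1 : ∀ m : ℕ, P a (m+1) / (m+1).factorial * (((m+1:ℕ):ℝ) * y ^ ((m+1)-1))
        = a * (P a m / m.factorial * y ^ m) + y * (P a m / m.factorial * ((m:ℝ) * y ^ (m-1))) := by
      intro m
      rw [P_succ, Nat.factorial_succ]
      rcases Nat.eq_zero_or_pos m with hm | hm
      · subst hm; simp [P_zero]
      · have : y ^ m = y * y ^ (m-1) := by
          rw [← pow_succ', Nat.sub_add_cancel hm]
        push_cast [Nat.add_sub_cancel]
        rw [this]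
        field_simp
    rw [tsum_congr congr1, Summable.tsum_add (hf.mul_left a) (hD.mul_left y),
      tsum_mul_left, tsum_mul_left]
  nlinarith [key]
end Binomial2

section Binomial3
variable {a : ℝ} (ha0 : 0 < a) (ha : a ≤ 1)
include ha0 ha

lemma binomial_sum {x : ℝ} (hx0 : 0 ≤ x) (hx : x ≤ 1/2) :
    ∑' n, P a n / n.factorial * x ^ n = (1 - x) ^ (-a) := by
  have hderiv : ∀ z ∈ Icc (0:ℝ) (1/2),
      HasDerivAt (fun w => (∑' n, P a n / n.factorial * w ^ n) * (1-w)^a) 0 z := by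
    intro z hz
    have hz' : z ∈ Ioo (-(3/4):ℝ) (3/4) := ⟨by linarith [hz.1], by linarith [hz.2]⟩
    have h1z : (0:ℝ) < 1 - z := by linarith [hz.2]
    have hd1 := bin_hasDerivAt ha0 ha hz'
    have hd2 : HasDerivAt (fun w : ℝ => (1-w)^a) (a * (1-z)^(a-1) * -1) z := by
      have h := (Real.hasDerivAt_rpow_const (x := 1-z) (p := a) (Or.inl h1z.ne'))
      exact h.comp z (by simpa using (hasDerivAt_id z).const_sub 1)
    have hprod := hd1.mul hd2
    refine hprod.congr_deriv (Eq.symm ?_)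
    have hkey := bin_deriv_eq ha0 ha (y := z)
      (by rw [abs_lt]; constructor <;> linarith [hz.1, hz.2])
    have hrpow : (1-z)^a = (1-z)^(a-1) * (1-z) := by
      rw [Real.rpow_sub h1z, Real.rpow_one]
      field_simp
    rw [hrpow]
    linear_combination (-(1-z)^(a-1)) * hkey
  have hcont : ContinuousOn (fun w => (∑' n, P a n / n.factorial * w ^ n) * (1-w)^a)
      (Icc (0:ℝ) (1/2)) :=
    fun z hz => ((hderiv z hz).continuousAt).continuousWithinAt
  have hconst := constant_of_has_deriv_right_zero hcont
    (fun z hz => (hderiv z (Ico_subset_Icc_self hz)).hasDerivWithinAt) x ⟨hx0, hx⟩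
  have hf0 : (∑' n, P a n / n.factorial * (0:ℝ) ^ n) = 1 := by
    rw [tsum_eq_single 0 (fun n hn => by simp [zero_pow hn])]
    simp [P_zero]
  rw [hf0] at hconst
  simp only [sub_zero, Real.one_rpow, mul_one] at hconst
  have h1x : (0:ℝ) < 1 - x := by linarith
  have hpos : (0:ℝ) < (1-x)^a := Real.rpow_pos_of_pos h1x a
  rw [Real.rpow_neg h1x.le]
  field_simp at hconst ⊢
  linarith [hconst]
end Binomial3

lemma Gamma_P {a : ℝ} (ha : 0 < a) (n : ℕ) : Real.Gamma a * P a n = Real.Gamma (a + n) := by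
  induction n with
  | zero => simp [P_zero]
  | succ n ih =>
      rw [P_succ, ← mul_assoc, ih]
      have h : a + (n:ℝ) ≠ 0 := by positivity
      rw [show a + ((n:ℕ)+1:ℕ) = (a + n) + 1 by push_cast; ring, Real.Gamma_add_one h]
      ring

lemma realBeta_eqOn {u v : ℝ} :
    EqOn (fun t : ℝ => ((t ^ (u-1) * (1-t) ^ (v-1) : ℝ) : ℂ))
      (fun t : ℝ => (t:ℂ) ^ ((u:ℂ)-1) * (1-(t:ℂ)) ^ ((v:ℂ)-1)) (uIcc (0:ℝ) 1) := by
  intro t ht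
  rw [uIcc_of_le zero_le_one] at ht
  simp only [Complex.ofReal_mul]
  rw [Complex.ofReal_cpow ht.1, Complex.ofReal_cpow (by linarith [ht.2])]
  push_cast
  ring_nf

lemma realBetaIntegrable {u v : ℝ} (hu : 0 < u) (hv : 0 < v) :
    IntervalIntegrable (fun t : ℝ => t ^ (u-1) * (1-t) ^ (v-1)) volume 0 1 := by
  have h := Complex.betaIntegral_convergent (u := u) (v := v) (by simpa) (by simpa)
  have h2 : IntervalIntegrable (fun t : ℝ => ((t ^ (u-1) * (1-t) ^ (v-1) : ℝ) : ℂ)) volume 0 1 := by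
    apply h.congr
    intro t ht
    exact (realBeta_eqOn (uIoc_subset_uIcc ht)).symm
  rw [intervalIntegrable_iff_integrableOn_Ioc_of_le zero_le_one]
  rw [intervalIntegrable_iff_integrableOn_Ioc_of_le zero_le_one] at h2
  apply h2.re.congr
  filter_upwards with t
  simp

lemma realBeta {u v : ℝ} (hu : 0 < u) (hv : 0 < v) :
    ∫ t in (0:ℝ)..1, t ^ (u-1) * (1-t) ^ (v-1) = Gamma u * Gamma v / Gamma (u+v) := by
  have key := Complex.Gamma_mul_Gamma_eq_betaIntegral (s := u) (t := v) (by simpa) (by simpa)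
  have hG : Complex.Gamma ((u:ℂ)+(v:ℂ)) ≠ 0 := by
    rw [show ((u:ℂ)+(v:ℂ)) = ((u+v : ℝ) : ℂ) by push_cast; ring, Complex.Gamma_ofReal]
    exact_mod_cast (Real.Gamma_pos_of_pos (by linarith)).ne'
  have hbeta : Complex.betaIntegral u v
      = ((∫ t in (0:ℝ)..1, t ^ (u-1) * (1-t) ^ (v-1) : ℝ) : ℂ) := by
    rw [Complex.betaIntegral, ← intervalIntegral.integral_ofReal]
    exact (intervalIntegral.integral_congr realBeta_eqOn).symm
  rw [hbeta] at key
  have : ((Gamma u * Gamma v : ℝ) : ℂ)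
      = ((Gamma (u+v) * ∫ t in (0:ℝ)..1, t ^ (u-1) * (1-t) ^ (v-1) : ℝ) : ℂ) := by
    rw [Complex.ofReal_mul, Complex.ofReal_mul, ← Complex.Gamma_ofReal, ← Complex.Gamma_ofReal,
      ← Complex.Gamma_ofReal]
    push_cast
    exact key
  have h2 := Complex.ofReal_inj.mp this
  have hG' : Gamma (u+v) ≠ 0 := (Real.Gamma_pos_of_pos (by linarith)).ne'
  field_simp
  linarith [h2]
noncomputable def gn (n : ℕ) (t : ℝ) : ℝ :=
  P (1/3) n / n.factorial * (1/2:ℝ)^n * (t ^ ((n:ℝ) + 2/3 - 1) * (1-t) ^ ((1/3:ℝ) - 1))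

lemma gn_integrableOn (n : ℕ) : IntegrableOn (gn n) (Ioo (0:ℝ) 1) volume := by
  have h := (realBetaIntegrable (u := (n:ℝ) + 2/3) (v := 1/3) (by positivity) (by norm_num)).1
  have h2 := (h.mono_set Ioo_subset_Ioc_self).const_mul (P (1/3) n / n.factorial * (1/2:ℝ)^n)
  exact h2

lemma setBeta {u v : ℝ} (hu : 0 < u) (hv : 0 < v) :
    ∫ t in Ioo (0:ℝ) 1, t ^ (u-1) * (1-t) ^ (v-1) = Gamma u * Gamma v / Gamma (u+v) := by
  rw [← integral_Ioc_eq_integral_Ioo, ← intervalIntegral.integral_of_le zero_le_one]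
  exact realBeta hu hv

lemma gn_integral (n : ℕ) :
    ∫ t in Ioo (0:ℝ) 1, gn n t
      = P (1/3) n / n.factorial * (1/2:ℝ)^n * (Gamma (2/3) * Gamma (1/3) * (P (2/3) n / n.factorial)) := by
  rw [show (fun t => gn n t) = fun t => P (1/3) n / n.factorial * (1/2:ℝ)^n *
    (t ^ (((n:ℝ) + 2/3) - 1) * (1-t) ^ ((1/3:ℝ) - 1)) from rfl, MeasureTheory.integral_const_mul,
    setBeta (by positivity) (by norm_num : (0:ℝ) < 1/3)]
  congr 1
  have h1 : (n:ℝ) + 2/3 + 1/3 = (n:ℝ) + 1 := by ring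
  have h2 : Gamma ((n:ℝ) + 1) = n.factorial := Real.Gamma_nat_eq_factorial n
  have h3 : Gamma (2/3) * P (2/3) n = Gamma ((n:ℝ) + 2/3) := by
    rw [Gamma_P (by norm_num : (0:ℝ) < 2/3) n, add_comm]
  have hfac : (0:ℝ) < n.factorial := by positivity
  rw [h1, h2, ← h3]
  field_simp

lemma gn_nonneg {n : ℕ} {t : ℝ} (ht : t ∈ Ioo (0:ℝ) 1) : 0 ≤ gn n t := by
  have h1 : 0 < P (1/3) n := P_pos (by norm_num) n
  have ht0 : (0:ℝ) < t := ht.1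
  have ht1 : t < 1 := ht.2
  have h2 : (0:ℝ) < 1 - t := by linarith
  unfold gn
  positivity

lemma gn_norm_bound (n : ℕ) :
    ∫ t in Ioo (0:ℝ) 1, ‖gn n t‖
      ≤ (1/2:ℝ)^n * ∫ t in Ioo (0:ℝ) 1, t ^ ((2/3:ℝ)-1) * (1-t) ^ ((1/3:ℝ)-1) := by
  rw [← MeasureTheory.integral_const_mul]
  have hint1 : IntegrableOn (fun t : ℝ => ‖gn n t‖) (Ioo 0 1) := (gn_integrableOn n).norm
  have hint2 : IntegrableOn
      (fun t : ℝ => (1/2:ℝ)^n * (t ^ ((2/3:ℝ)-1) * (1-t) ^ ((1/3:ℝ)-1))) (Ioo 0 1) := by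
    have h := (realBetaIntegrable (u := (2/3:ℝ)) (v := 1/3) (by norm_num) (by norm_num)).1
    exact (h.mono_set Ioo_subset_Ioc_self).const_mul _
  apply setIntegral_mono_on hint1 hint2 measurableSet_Ioo
  intro t ht
  rw [Real.norm_eq_abs, abs_of_nonneg (gn_nonneg ht)]
  unfold gn
  have ht0 := ht.1
  have ht1 := ht.2
  have h2 : (0:ℝ) < 1 - t := by linarith
  have hA : P (1/3) n / n.factorial * (1/2:ℝ)^n ≤ (1/2:ℝ)^n := by
    have := coef_le_one (by norm_num : (0:ℝ) < 1/3) (by norm_num) n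
    rw [abs_le] at this
    nlinarith [pow_pos (by norm_num : (0:ℝ) < 1/2) n]
  have hApos : 0 < P (1/3) n / n.factorial * (1/2:ℝ)^n := by
    have := P_pos (by norm_num : (0:ℝ) < 1/3) n
    positivity
  have hrw : t ^ ((n:ℝ) + 2/3 - 1) ≤ t ^ ((2/3:ℝ) - 1) :=
    Real.rpow_le_rpow_of_exponent_ge ht0 ht1.le (by have := Nat.cast_nonneg (α := ℝ) n; linarith)
  have hpos2 : (0:ℝ) ≤ (1-t) ^ ((1/3:ℝ)-1) := Real.rpow_nonneg h2.le _
  have hpos3 : (0:ℝ) ≤ t ^ ((n:ℝ) + 2/3 - 1) := Real.rpow_nonneg ht0.le _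
  apply mul_le_mul hA (mul_le_mul_of_nonneg_right hrw hpos2) (by positivity) (by positivity)

lemma summable_gn_norm :
    Summable (fun n => ∫ t in Ioo (0:ℝ) 1, ‖gn n t‖) := by
  apply Summable.of_nonneg_of_le
    (fun n => integral_nonneg (fun t => norm_nonneg _)) gn_norm_bound
  exact (summable_geometric_of_lt_one (by norm_num) (by norm_num)).mul_right _

lemma exchange :
    ∑' n, ∫ t in Ioo (0:ℝ) 1, gn n t = ∫ t in Ioo (0:ℝ) 1, ∑' n, gn n t :=
  integral_tsum_of_summable_integral_norm (fun n => gn_integrableOn n) summable_gn_norm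



lemma gn_tsum {t : ℝ} (ht : t ∈ Ioo (0:ℝ) 1) :
    ∑' n, gn n t
      = (t ^ (-(1/3):ℝ) * (1-t) ^ ((1/3:ℝ)-1)) * (1 - t/2) ^ (-(1/3):ℝ) := by
  have hcongr : ∀ n : ℕ, gn n t = (t ^ (-(1/3):ℝ) * (1-t) ^ ((1/3:ℝ)-1))
      * (P (1/3) n / n.factorial * (t/2)^n) := by
    intro n
    unfold gn
    have h1 : t ^ ((n:ℝ) + 2/3 - 1) = t ^ (n:ℕ) * t ^ (-(1/3):ℝ) := by
      rw [← Real.rpow_natCast t n, ← Real.rpow_add ht.1]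
      ring_nf
    rw [h1, div_pow, div_pow]
    ring
  rw [tsum_congr hcongr, tsum_mul_left,
    binomial_sum (by norm_num) (by norm_num) (by linarith [ht.1.le] : (0:ℝ) ≤ t/2)
      (by linarith [ht.2.le] : t/2 ≤ 1/2)]

lemma subst_eval :
    ∫ t in Ioo (0:ℝ) 1, (t ^ (-(1/3):ℝ) * (1-t) ^ ((1/3:ℝ)-1)) * (1 - t/2) ^ (-(1/3):ℝ)
      = ((2:ℝ) ^ ((2/3):ℝ))⁻¹ * (Gamma (2/3) * Gamma (1/6) / Gamma (5/6)) := by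
  have himg : (fun t : ℝ => 2*t - t^2) '' Ioo 0 1 = Ioo (0:ℝ) 1 := by
    ext u
    constructor
    · rintro ⟨t, ht, rfl⟩
      refine ⟨?_, ?_⟩ <;> show _ < _ <;> simp only [] <;> nlinarith [ht.1, ht.2]
    · intro hu
      refine ⟨1 - Real.sqrt (1-u), ⟨?_, ?_⟩, ?_⟩
      · have h1 : Real.sqrt (1-u) < 1 := by
          nlinarith [Real.sq_sqrt (by linarith [hu.2] : (0:ℝ) ≤ 1-u),
            Real.sqrt_nonneg (1-u), hu.1]
        linarith
      · have h2 : 0 < Real.sqrt (1-u) := Real.sqrt_pos.mpr (by linarith [hu.2])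
        linarith
      · have h3 : Real.sqrt (1-u) ^ 2 = 1 - u := Real.sq_sqrt (by linarith [hu.2])
        show 2*(1 - Real.sqrt (1-u)) - (1 - Real.sqrt (1-u))^2 = u
        linear_combination -h3
  have hderiv : ∀ t ∈ Ioo (0:ℝ) 1,
      HasDerivWithinAt (fun t : ℝ => 2*t - t^2) (2 - 2*t) (Ioo 0 1) t := by
    intro t ht
    have h : HasDerivAt (fun t : ℝ => 2*t - t^2) (2 - 2*t) t := by
      have := ((hasDerivAt_id t).const_mul 2).sub (hasDerivAt_pow 2 t)
      exact this.congr_deriv (by norm_num)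
    exact h.hasDerivWithinAt
  have hinj : InjOn (fun t : ℝ => 2*t - t^2) (Ioo 0 1) := by
    intro s hs t ht h
    simp only at h
    have h0 : (s - t) * (2 - s - t) = 0 := by linear_combination h
    rcases mul_eq_zero.mp h0 with h1 | h2
    · linarith
    · nlinarith [hs.2, ht.2]
  have key := MeasureTheory.integral_image_eq_integral_abs_deriv_smul measurableSet_Ioo hderiv hinj
    (fun u : ℝ => u ^ ((2/3:ℝ)-1) * (1-u) ^ ((1/6:ℝ)-1))
  rw [himg, setBeta (by norm_num) (by norm_num),
    show (2/3:ℝ)+1/6 = 5/6 by norm_num] at key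
  have hpt : ∀ t ∈ Ioo (0:ℝ) 1,
      |2 - 2*t| • ((2*t - t^2) ^ ((2/3:ℝ)-1) * (1-(2*t - t^2)) ^ ((1/6:ℝ)-1))
      = (2:ℝ) ^ ((2/3):ℝ)
        * ((t ^ (-(1/3):ℝ) * (1-t) ^ ((1/3:ℝ)-1)) * (1 - t/2) ^ (-(1/3):ℝ)) := by
    intro t ht
    have ht0 := ht.1
    have ht1 := ht.2
    have h2 : (0:ℝ) < 1 - t := by linarith
    have h3 : (0:ℝ) < 2 - t := by linarith
    have e1 : (2*t - t^2) ^ ((2/3:ℝ)-1) = t ^ (-(1/3):ℝ) * (2-t) ^ (-(1/3):ℝ) := by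
      rw [show (2/3:ℝ)-1 = -(1/3) by norm_num, show 2*t-t^2 = t*(2-t) by ring,
        Real.mul_rpow ht0.le h3.le]
    have e2 : (1-(2*t - t^2)) ^ ((1/6:ℝ)-1) = (1-t) ^ (-(5/3):ℝ) := by
      rw [show 1-(2*t-t^2) = (1-t)^2 by ring, ← Real.rpow_natCast (1-t) 2,
        ← Real.rpow_mul h2.le]
      norm_num
    have e3 : (1 - t/2) ^ (-(1/3):ℝ) = (2-t) ^ (-(1/3):ℝ) * (2:ℝ) ^ ((1/3):ℝ) := by
      rw [show 1-t/2 = (2-t)/2 by ring, Real.div_rpow h3.le (by norm_num),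
        Real.rpow_neg (by norm_num : (0:ℝ) ≤ 2), div_eq_mul_inv, inv_inv]
    have e4 : ((1:ℝ)/3:ℝ)-1 = -(2/3:ℝ) := by norm_num
    have e5 : (1-t) * (1-t) ^ (-(5/3):ℝ) = (1-t) ^ (-(2/3):ℝ) := by
      have h := Real.rpow_add h2 1 (-(5/3))
      rw [Real.rpow_one] at h
      rw [← h]
      norm_num
    have e6 : (2:ℝ) ^ ((2/3):ℝ) * (2:ℝ) ^ ((1/3):ℝ) = 2 := by
      rw [← Real.rpow_add (by norm_num : (0:ℝ) < 2)]
      norm_num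
    rw [smul_eq_mul, e1, e2, e3, show (1/3:ℝ)-1 = -(2/3:ℝ) by norm_num,
      abs_of_nonneg (by linarith : (0:ℝ) ≤ 2 - 2*t)]
    linear_combination (2 * t ^ (-(1/3):ℝ) * (2-t) ^ (-(1/3):ℝ)) * e5
      - (t ^ (-(1/3):ℝ) * (2-t) ^ (-(1/3):ℝ) * (1-t) ^ (-(2/3):ℝ)) * e6
  rw [setIntegral_congr_fun measurableSet_Ioo hpt, MeasureTheory.integral_const_mul] at key
  have hpow : (0:ℝ) < (2:ℝ) ^ ((2/3):ℝ) := Real.rpow_pos_of_pos two_pos _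
  field_simp at key ⊢
  linarith [key]

lemma gauss_sum :
    ∑' n : ℕ, P (1/3) n * P (2/3) n / ((n.factorial:ℝ) * n.factorial) * (1/2:ℝ)^n
      = Real.sqrt Real.pi / (Gamma (2/3) * Gamma (5/6)) := by
  have hG13 : (0:ℝ) < Gamma (1/3) := Real.Gamma_pos_of_pos (by norm_num)
  have hG23 : (0:ℝ) < Gamma (2/3) := Real.Gamma_pos_of_pos (by norm_num)
  have hG16 : (0:ℝ) < Gamma (1/6) := Real.Gamma_pos_of_pos (by norm_num)
  have hG56 : (0:ℝ) < Gamma (5/6) := Real.Gamma_pos_of_pos (by norm_num)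
  have hterm : ∀ n : ℕ, P (1/3) n * P (2/3) n / ((n.factorial:ℝ) * n.factorial) * (1/2:ℝ)^n
      = (Gamma (2/3) * Gamma (1/3))⁻¹ * ∫ t in Ioo (0:ℝ) 1, gn n t := by
    intro n
    rw [gn_integral n]
    have hfac : (0:ℝ) < n.factorial := by positivity
    field_simp
  rw [tsum_congr hterm, tsum_mul_left, exchange,
    setIntegral_congr_fun measurableSet_Ioo (fun t ht => gn_tsum ht), subst_eval]
  have hdup := Real.Gamma_mul_Gamma_add_half (1/6)
  rw [show (1/6:ℝ)+1/2 = 2/3 by norm_num, show 2*(1/6:ℝ) = 1/3 by norm_num,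
    show (1:ℝ)-1/3 = 2/3 by norm_num] at hdup
  have hpow : (0:ℝ) < (2:ℝ) ^ ((2/3):ℝ) := Real.rpow_pos_of_pos two_pos _
  have hsq : (0:ℝ) < Real.sqrt Real.pi := Real.sqrt_pos.mpr Real.pi_pos
  field_simp
  linear_combination hdup

theorem gauss_2F1_half :
    hyper2F1 (1 / 3) (2 / 3) 1 (1 / 2) =
      Real.sqrt Real.pi / (Real.Gamma (2 / 3) * Real.Gamma (5 / 6)) := by
  have h : ∀ n : ℕ, (ascPochhammer ℝ n).eval (1/3 : ℝ) * (ascPochhammer ℝ n).eval (2/3 : ℝ) /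
      ((ascPochhammer ℝ n).eval (1:ℝ) * n.factorial) * (1/2:ℝ) ^ n
      = P (1/3) n * P (2/3) n / ((n.factorial:ℝ) * n.factorial) * (1/2:ℝ)^n := by
    intro n
    rw [ascPochhammer_eval_one]
    rfl
  rw [hyper2F1, tsum_congr h, gauss_sum]
end

section
/- The condition-number recursion for the hexagonal lattice: for κ ≥ 1, define g(κ) = 3^{−2/3} (κ + 2) (1 + κ + κ²)^{−1/3}. Then 1 ≤ g(κ) ≤ κ, with strict inequality g(κ) < κ when κ > 1. -/
lemma cube_rpow_aux (x : ℝ) (hx : 0 ≤ x) : (x ^ ((1:ℝ)/3)) ^ 3 = x := by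
  rw [← Real.rpow_natCast (x ^ ((1:ℝ)/3)) 3, ← Real.rpow_mul hx]
  norm_num

theorem hexagonal_condition_number_iteration
    (g : ℝ → ℝ)
    (hg : ∀ κ, g κ = (3 : ℝ) ^ ((1 : ℝ) / 3) / 3 * (κ + 2) *
      (1 + κ + κ ^ 2) ^ (-(1 : ℝ) / 3)) :
    g 1 = 1 ∧ (∀ κ : ℝ, 1 ≤ κ → 1 ≤ g κ ∧ g κ ≤ κ) ∧ (∀ κ : ℝ, 1 < κ → g κ < κ) := by
  set s : ℝ := (3:ℝ) ^ ((1:ℝ)/3) with hs_def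
  have hs : 0 < s := Real.rpow_pos_of_pos (by norm_num) _
  have hs3 : s ^ 3 = 3 := cube_rpow_aux 3 (by norm_num)
  have hrepr : ∀ κ : ℝ, 1 ≤ κ →
      g κ = s * (κ + 2) / (3 * ((1 + κ + κ^2) ^ ((1:ℝ)/3))) := by
    intro κ hκ
    have ha : (0:ℝ) ≤ 1 + κ + κ^2 := by nlinarith
    have ht : 0 < (1 + κ + κ^2) ^ ((1:ℝ)/3) :=
      Real.rpow_pos_of_pos (by nlinarith) _
    have hneg : (1 + κ + κ^2) ^ (-(1:ℝ)/3) = ((1 + κ + κ^2) ^ ((1:ℝ)/3))⁻¹ := by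
      rw [neg_div, Real.rpow_neg ha]
    rw [hg, hneg]
    field_simp
  have key : ∀ κ : ℝ, 1 ≤ κ → 1 ≤ g κ ∧ g κ ≤ κ := by
    intro κ hκ
    have hκ0 : (0:ℝ) ≤ κ := by linarith
    have ht : 0 < (1 + κ + κ^2) ^ ((1:ℝ)/3) :=
      Real.rpow_pos_of_pos (by nlinarith) _
    set t : ℝ := (1 + κ + κ^2) ^ ((1:ℝ)/3) with ht_def
    have ht3 : t ^ 3 = 1 + κ + κ^2 := cube_rpow_aux _ (by nlinarith)
    rw [hrepr κ hκ]
    constructor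
    · rw [le_div_iff₀ (by positivity)]
      have hcube : (1 * (3 * t)) ^ 3 ≤ (s * (κ + 2)) ^ 3 := by
        have h1 : (0:ℝ) ≤ (κ - 1)^3 := pow_nonneg (by linarith) 3
        have e1 : (1 * (3 * t)) ^ 3 = 27 * (1 + κ + κ^2) := by
          rw [one_mul, mul_pow, ht3]; ring
        have e2 : (s * (κ + 2)) ^ 3 = 3 * (κ + 2)^3 := by
          rw [mul_pow, hs3]
        rw [e1, e2]; nlinarith [h1]
      exact le_of_pow_le_pow_left₀ (by norm_num) (by positivity) hcube
    · rw [div_le_iff₀ (by positivity)]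
      have h5 : (0:ℝ) ≤ (κ - 1) * (9*κ^4 + 18*κ^3 + 26*κ^2 + 20*κ + 8) := by
        apply mul_nonneg (by linarith)
        nlinarith [pow_nonneg hκ0 4, pow_nonneg hκ0 3, sq_nonneg κ]
      have hcube : (s * (κ + 2)) ^ 3 ≤ (κ * (3 * t)) ^ 3 := by
        have e2 : (s * (κ + 2)) ^ 3 = 3 * (κ + 2)^3 := by rw [mul_pow, hs3]
        have e1 : (κ * (3 * t)) ^ 3 = κ^3 * (27 * (1 + κ + κ^2)) := by
          rw [mul_pow, mul_pow, ht3]; ring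
        rw [e1, e2]; nlinarith [h5]
      exact le_of_pow_le_pow_left₀ (by norm_num) (by positivity) hcube
  refine ⟨le_antisymm (key 1 le_rfl).2 (key 1 le_rfl).1, key, ?_⟩
  intro κ hκ
  have hκ1 : (1:ℝ) ≤ κ := le_of_lt hκ
  have hκ0 : (0:ℝ) ≤ κ := by linarith
  have ht : 0 < (1 + κ + κ^2) ^ ((1:ℝ)/3) :=
    Real.rpow_pos_of_pos (by nlinarith) _
  set t : ℝ := (1 + κ + κ^2) ^ ((1:ℝ)/3) with ht_def
  have ht3 : t ^ 3 = 1 + κ + κ^2 := cube_rpow_aux _ (by nlinarith)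
  rw [hrepr κ hκ1, div_lt_iff₀ (by positivity)]
  have h5 : (0:ℝ) < (κ - 1) * (9*κ^4 + 18*κ^3 + 26*κ^2 + 20*κ + 8) := by
    apply mul_pos (by linarith)
    nlinarith [pow_nonneg hκ0 4, pow_nonneg hκ0 3, sq_nonneg κ]
  have hcube : (s * (κ + 2)) ^ 3 < (κ * (3 * t)) ^ 3 := by
    have e2 : (s * (κ + 2)) ^ 3 = 3 * (κ + 2)^3 := by rw [mul_pow, hs3]
    have e1 : (κ * (3 * t)) ^ 3 = κ^3 * (27 * (1 + κ + κ^2)) := by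
      rw [mul_pow, mul_pow, ht3]; ring
    rw [e1, e2]; nlinarith [h5]
  exact lt_of_pow_lt_pow_left₀ 3 (by positivity) hcube
end
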